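/- arXiv:1901.01109 — 2 statements merged into one kernel-verified Lean document; each statement's English description precedes it below -/
import Mathlib

section
/- For all real $x > 0$, $a > 0$, complex $b$, and real $c > \max\{0, (1 - \mathrm{Re}(b))/a\}$, the Mellin–Barnes integral identity holds: $\frac{1}{2\pi i}\int_{c-i\infty}^{c+i\infty} \Gamma(s)\,\zeta(as+b)\, x^{-s}\, ds = \sum_{n=1}^{\infty} \frac{e^{-n^a x}}{n^b}$. -/
open Complex Real Filter MeasureTheory

/-!
Expanding `ζ(as + b) = ∑ n^{-b} (n^a)^{-s}`, which converges absolutely on the line `Re s = c`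
because `ac + Re b > 1`, and using `x^{-s} (n^a)^{-s} = (n^a x)^{-s}`, the integrand becomes
`∑ n^{-b} (n^a x)^{-s} Γ(s)`. Since `|Γ(c + it)| ≤ Γ(c + 2) / (c² + t²)` (from
`Γ(s + 2) = s (s + 1) Γ(s)` and `|Γ(s)| ≤ Γ(Re s)`), the resulting double sum-integral converges absolutely, so sum and integral may be exchanged, and each term is the
inverse Mellin transform of `Γ`, namely `e^{-y}` at `y = n^a x`.
-/

namespace Complex

theorem norm_Gamma_le_Gamma_re {s : ℂ} (hs : 0 < s.re) : ‖Gamma s‖ ≤ Real.Gamma s.re := by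
  rw [Gamma_eq_integral hs, Real.Gamma_eq_integral hs, GammaIntegral]
  refine (norm_integral_le_integral_norm _).trans_eq
    (setIntegral_congr_fun measurableSet_Ioi fun x hx => ?_)
  rw [norm_mul, norm_cpow_eq_rpow_re_of_pos hx, norm_real, Real.norm_of_nonneg (exp_pos _).le]
  simp

theorem norm_Gamma_mul_sq_norm_le {s : ℂ} (hs : 0 < s.re) :
    ‖Gamma s‖ * ‖s‖ ^ 2 ≤ Real.Gamma (s.re + 2) := by
  have hs0 : s ≠ 0 := fun h => by simp [h] at hs
  have hs1 : s + 1 ≠ 0 := fun h => by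
    have := congrArg re h
    simp only [add_re, one_re, zero_re] at this
    linarith
  have hle : ‖s‖ ≤ ‖s + 1‖ := by
    rw [← sq_le_sq₀ (norm_nonneg _) (norm_nonneg _), Complex.sq_norm, Complex.sq_norm,
      normSq_apply, normSq_apply]
    simp only [add_re, one_re, add_im, one_im, add_zero]
    nlinarith
  calc ‖Gamma s‖ * ‖s‖ ^ 2 ≤ ‖Gamma s‖ * (‖s + 1‖ * ‖s‖) := by
        rw [sq]
        gcongr
    _ = ‖Gamma (s + 2)‖ := by
        rw [show s + 2 = s + 1 + 1 by ring, Gamma_add_one _ hs1, Gamma_add_one _ hs0,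
          norm_mul, norm_mul]
        ring
    _ ≤ Real.Gamma (s.re + 2) := by
        simpa using norm_Gamma_le_Gamma_re (s := s + 2) (by simp; linarith)

theorem continuousOn_Gamma_re_pos : ContinuousOn Gamma {s | 0 < s.re} := fun s hs =>
  (continuousAt_Gamma s fun m h => by
    have := congrArg re h
    simp only [neg_re, natCast_re] at this
    linarith [m.cast_nonneg (α := ℝ), show 0 < s.re from hs]).continuousWithinAt

theorem verticalIntegrable_Gamma {σ : ℝ} (hσ : 0 < σ) : VerticalIntegrable Gamma σ := by
  have hline : Continuous fun t : ℝ => Gamma (σ + t * I) :=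
    continuousOn_Gamma_re_pos.comp_continuous (by fun_prop) fun t => by simpa using hσ
  have hbound : Integrable fun t : ℝ => Real.Gamma (σ + 2) / σ ^ 2 * (1 + (t / σ) ^ 2)⁻¹ :=
    (integrable_inv_one_add_sq.comp_div hσ.ne').const_mul _
  refine hbound.mono' hline.aestronglyMeasurable (Eventually.of_forall fun t => ?_)
  have hnorm : ‖(σ : ℂ) + t * I‖ ^ 2 = σ ^ 2 * (1 + (t / σ) ^ 2) := by
    rw [Complex.sq_norm, normSq_add_mul_I]
    field_simp
  have hre : ((σ : ℂ) + t * I).re = σ := by simp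
  have key := norm_Gamma_mul_sq_norm_le (s := σ + t * I) (by rwa [hre])
  rw [hnorm, hre] at key
  rwa [← div_eq_mul_inv, div_div, le_div_iff₀ (by positivity)]

theorem mellinInv_Gamma {σ x : ℝ} (hσ : 0 < σ) (hx : 0 < x) :
    mellinInv σ Gamma x = cexp (-x) := by
  have hmellin : ∀ t : ℝ,
      Gamma (σ + t * I) = mellin (fun x : ℝ => (rexp (-x) : ℂ)) (σ + t * I) := fun t => by
    rw [← GammaIntegral_eq_mellin, Gamma_eq_integral (by simpa using hσ)]
  have hconv : MellinConvergent (fun x : ℝ => (rexp (-x) : ℂ)) σ :=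
    (GammaIntegral_convergent (s := σ) (by simpa using hσ)).congr_fun
      (fun t _ => by simp [mul_comm]) measurableSet_Ioi
  have hvert : VerticalIntegrable (mellin fun x : ℝ => (rexp (-x) : ℂ)) σ :=
    (verticalIntegrable_Gamma hσ).congr (Eventually.of_forall hmellin)
  calc mellinInv σ Gamma x = mellinInv σ (mellin fun x : ℝ => (rexp (-x) : ℂ)) x := by
        simp only [mellinInv, hmellin]
    _ = cexp (-x) := by
        rw [mellinInv_mellin_eq σ _ hx hconv hvert (by fun_prop)]
        push_cast
        rfl

end Complex

theorem mellinInv_mul_tsum_cpow {σ x : ℝ} {f : ℂ → ℂ} (hf : Complex.VerticalIntegrable f σ)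
    (hx : 0 < x) {c : ℕ → ℂ} {r : ℕ → ℝ} (hr : ∀ n, 0 < r n)
    (hsum : Summable fun n => ‖c n‖ * r n ^ (-σ)) :
    mellinInv σ (fun s => f s * ∑' n, c n * (r n : ℂ) ^ (-s)) x =
      ∑' n, c n * mellinInv σ f (r n * x) := by
  set F : ℕ → ℝ → ℂ := fun n t =>
    c n * (((r n * x : ℝ) : ℂ) ^ (-(σ + t * I)) • f (σ + t * I)) with hF
  have hnorm : ∀ n t, ‖F n t‖ = ‖c n‖ * r n ^ (-σ) * x ^ (-σ) * ‖f (σ + t * I)‖ := fun n t => by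
    rw [hF, norm_mul, norm_smul, norm_cpow_eq_rpow_re_of_pos (mul_pos (hr n) hx),
      Real.mul_rpow (hr n).le hx.le]
    simp only [neg_re, add_re, ofReal_re, mul_re, I_re, I_im, ofReal_im]
    ring_nf
  have hint : ∀ n, Integrable (F n) := fun n => by
    refine (hf.norm.const_mul (‖c n‖ * r n ^ (-σ) * x ^ (-σ))).mono' ?_
      (Eventually.of_forall fun t => (hnorm n t).le)
    have hpow : Continuous fun t : ℝ => ((r n * x : ℝ) : ℂ) ^ (-(σ + t * I)) :=
      Continuous.const_cpow (by fun_prop) (Or.inl (ofReal_ne_zero.mpr (mul_pos (hr n) hx).ne'))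
    exact aestronglyMeasurable_const.mul (hpow.aestronglyMeasurable.smul hf.aestronglyMeasurable)
  have hsumint : Summable fun n => ∫ t, ‖F n t‖ := by
    simp_rw [hnorm, integral_const_mul]
    exact (hsum.mul_right _).mul_right _
  have hexpand : ∀ t : ℝ, (x : ℂ) ^ (-(σ + t * I)) •
      (f (σ + t * I) * ∑' n, c n * (r n : ℂ) ^ (-(σ + t * I))) = ∑' n, F n t := fun t => by
    simp only [hF, smul_eq_mul, ← tsum_mul_left]
    congr 1 with n
    rw [ofReal_mul, mul_cpow_ofReal_nonneg (hr n).le hx.le]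
    ring
  calc mellinInv σ (fun s => f s * ∑' n, c n * (r n : ℂ) ^ (-s)) x
      = (1 / (2 * π)) • ∫ t, ∑' n, F n t := by simp only [mellinInv, hexpand]
    _ = ∑' n, c n * mellinInv σ f (r n * x) := by
      rw [← integral_tsum_of_summable_integral_norm hint hsumint, ← tsum_const_smul'']
      congr 1 with n
      rw [hF, integral_const_mul, mellinInv, mul_smul_comm]

theorem riemannZeta_mul_add_eq_tsum {a : ℝ} {b s : ℂ} (h : 1 < (a * s + b).re) :
    riemannZeta (a * s + b) =
      ∑' n : ℕ, ((n + 1 : ℕ) : ℂ) ^ (-b) * ((((n + 1 : ℕ) : ℝ) ^ a : ℝ) : ℂ) ^ (-s) := by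
  rw [zeta_eq_tsum_one_div_nat_add_one_cpow h]
  congr 1 with n
  have hn : ((n : ℂ) + 1) ≠ 0 := by exact_mod_cast n.succ_ne_zero
  rw [← cpow_mul_ofReal_nonneg (by positivity), one_div, ← cpow_neg]
  push_cast
  rw [← cpow_add _ _ hn]
  ring_nf

theorem summable_norm_cpow_neg_mul_rpow_neg {a c : ℝ} {b : ℂ} (h : 1 < a * c + b.re) :
    Summable fun n : ℕ => ‖((n + 1 : ℕ) : ℂ) ^ (-b)‖ * (((n + 1 : ℕ) : ℝ) ^ a) ^ (-c) := by
  have hp : Summable fun n : ℕ => ((n + 1 : ℕ) : ℝ) ^ (-(a * c + b.re)) :=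
    (summable_nat_add_iff 1).mpr (Real.summable_nat_rpow.mpr (by linarith))
  refine hp.congr fun n => ?_
  have hn : (0 : ℝ) < ((n + 1 : ℕ) : ℝ) := by positivity
  rw [← ofReal_natCast, norm_cpow_eq_rpow_re_of_pos hn, ← Real.rpow_mul hn.le,
    ← Real.rpow_add hn]
  simp only [neg_re]
  ring_nf

/-- Mellin–Barnes integral identity
`(1/(2πi)) ∫_{c-i∞}^{c+i∞} Γ(s) ζ(as+b) x^{-s} ds = ∑_{n≥1} e^{-n^a x} / n^b`. -/
theorem mellin_barnes_zeta (x a : ℝ) (b : ℂ) (c : ℝ)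
    (hx : 0 < x) (ha : 0 < a) (hc0 : 0 < c) (hc : (1 - b.re) / a < c) :
    (2 * (π : ℂ) * Complex.I)⁻¹ *
      (Complex.I * ∫ t : ℝ, Complex.Gamma ((c : ℂ) + (t : ℂ) * Complex.I) *
        riemannZeta ((a : ℂ) * ((c : ℂ) + (t : ℂ) * Complex.I) + b) *
        (x : ℂ) ^ (-((c : ℂ) + (t : ℂ) * Complex.I))) =
    ∑' n : ℕ, Complex.exp (-((((n + 1 : ℕ) : ℝ) ^ a * x : ℝ) : ℂ)) / ((n + 1 : ℕ) : ℂ) ^ b := by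
  have hac : 1 < a * c + b.re := by
    rw [div_lt_iff₀ ha] at hc
    linarith
  have hr : ∀ n : ℕ, 0 < ((n + 1 : ℕ) : ℝ) ^ a := fun n => by positivity
  have hζ : ∀ t : ℝ, riemannZeta (a * (c + t * I) + b) =
      ∑' n : ℕ, ((n + 1 : ℕ) : ℂ) ^ (-b) * ((((n + 1 : ℕ) : ℝ) ^ a : ℝ) : ℂ) ^ (-(c + t * I)) :=
    fun t => riemannZeta_mul_add_eq_tsum (by simpa using hac)
  calc _ = mellinInv c (fun s => Gamma s *
        ∑' n : ℕ, ((n + 1 : ℕ) : ℂ) ^ (-b) * ((((n + 1 : ℕ) : ℝ) ^ a : ℝ) : ℂ) ^ (-s)) x := by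
        simp only [mellinInv, hζ, smul_eq_mul, real_smul, ← mul_assoc]
        congr 1
        · have hπ : (π : ℂ) ≠ 0 := ofReal_ne_zero.mpr pi_ne_zero
          push_cast
          field_simp
        · congr 1 with t
          ring
    _ = ∑' n : ℕ, ((n + 1 : ℕ) : ℂ) ^ (-b) * mellinInv c Gamma (((n + 1 : ℕ) : ℝ) ^ a * x) :=
        mellinInv_mul_tsum_cpow (verticalIntegrable_Gamma hc0) hx hr
          (summable_norm_cpow_neg_mul_rpow_neg hac)
    _ = _ := tsum_congr fun n => by
        rw [mellinInv_Gamma hc0 (mul_pos (hr n) hx), cpow_neg, inv_mul_eq_div]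
end

section
/- For every natural number $N$, as $x \to 0^+$ we have $\sum_{n=1}^{\infty} e^{-n^2 x} = \frac{1}{2}\sqrt{\pi/x} - \frac{1}{2} + o(x^N)$. -/
/-!
Poisson summation for the Gaussian (Jacobi's transformation of `θ(x) = ∑_{n ∈ ℤ} e^{-n² x}`) gives
`θ(x) = √(π/x) θ(π²/x)`. Writing `θ(c) = 1 + 2 T(c)` with `T = thetaTail`, the error term is
therefore exactly `√(π/x) T(π²/x)`. Since `T(c) = O(e^{-c})` as `c → ∞`, the error is
`O(x⁻¹ e^{-π²/x})`, which is smaller than every power of `x` as `x → 0⁺`.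
-/

open Real Filter Asymptotics Topology

noncomputable def thetaTail (c : ℝ) : ℝ :=
  ∑' n : ℕ, exp (-(c * ((n : ℝ) + 1) ^ 2))

lemma summable_exp_neg_mul_nat_sq {c : ℝ} (hc : 0 < c) :
    Summable fun n : ℕ => exp (-(c * (n : ℝ) ^ 2)) := by
  simpa using Real.summable_exp_nat_mul_of_ge (neg_lt_zero.mpr hc) fun n =>
    (by exact_mod_cast Nat.le_self_pow two_ne_zero n : (n : ℝ) ≤ (n : ℝ) ^ 2)

lemma summable_exp_neg_mul_int_sq {c : ℝ} (hc : 0 < c) :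
    Summable fun n : ℤ => exp (-(c * (n : ℝ) ^ 2)) :=
  .of_nat_of_neg (by simpa using summable_exp_neg_mul_nat_sq hc)
    (by simpa using summable_exp_neg_mul_nat_sq hc)

lemma tsum_int_exp_neg_mul_sq_eq_one_add_two_mul_thetaTail {c : ℝ} (hc : 0 < c) :
    ∑' n : ℤ, exp (-(c * (n : ℝ) ^ 2)) = 1 + 2 * thetaTail c := by
  rw [tsum_int_eq_zero_add_two_mul_tsum_pnat (fun n => by simp) (summable_exp_neg_mul_int_sq hc)]
  simpa [thetaTail] using tsum_pnat_eq_tsum_succ (f := fun n : ℕ => exp (-(c * (n : ℝ) ^ 2)))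

lemma tsum_int_exp_neg_mul_sq_eq_sqrt_mul {c : ℝ} (hc : 0 < c) :
    ∑' n : ℤ, exp (-(c * (n : ℝ) ^ 2)) =
      √(π / c) * ∑' n : ℤ, exp (-(π ^ 2 / c * (n : ℝ) ^ 2)) := by
  have h := Real.tsum_exp_neg_mul_int_sq (div_pos hc pi_pos)
  have hsqrt : (1 : ℝ) / (c / π) ^ (1 / 2 : ℝ) = √(π / c) := by
    rw [← sqrt_eq_rpow, one_div, ← sqrt_inv, inv_div]
  have hc' : -π * (c / π) = -c := by field_simp
  have hπ : -π / (c / π) = -(π ^ 2 / c) := by field_simp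
  simpa only [hsqrt, hc', hπ, neg_mul] using h

lemma thetaTail_functional_equation {c : ℝ} (hc : 0 < c) :
    thetaTail c - (√(π / c) / 2 - 1 / 2) = √(π / c) * thetaTail (π ^ 2 / c) := by
  have h := tsum_int_exp_neg_mul_sq_eq_sqrt_mul hc
  rw [tsum_int_exp_neg_mul_sq_eq_one_add_two_mul_thetaTail hc,
    tsum_int_exp_neg_mul_sq_eq_one_add_two_mul_thetaTail (by positivity)] at h
  linarith

lemma exp_neg_mul_succ_sq_le {c : ℝ} (hc : 1 ≤ c) (n : ℕ) :
    exp (-(c * ((n : ℝ) + 1) ^ 2)) ≤ exp (-c) * exp (-n) := by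
  rw [← exp_add, exp_le_exp]
  have hn : (0 : ℝ) ≤ n := n.cast_nonneg
  nlinarith [mul_nonneg (sub_nonneg.mpr hc) hn, mul_nonneg (zero_le_one.trans hc) (sq_nonneg (n : ℝ))]

lemma thetaTail_isBigO_exp_neg : thetaTail =O[atTop] fun c => exp (-c) := by
  refine .of_bound (∑' n : ℕ, exp (-(n : ℝ))) ?_
  filter_upwards [eventually_ge_atTop 1] with c hc
  have hT : thetaTail c ≤ exp (-c) * ∑' n : ℕ, exp (-(n : ℝ)) := by
    have hK := summable_exp_neg_nat.mul_left (exp (-c))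
    rw [← tsum_mul_left]
    exact (hK.of_nonneg_of_le (fun _ => (exp_pos _).le) (exp_neg_mul_succ_sq_le hc)).tsum_le_tsum
      (exp_neg_mul_succ_sq_le hc) hK
  have h0 : 0 ≤ thetaTail c := tsum_nonneg fun _ => (exp_pos _).le
  rwa [norm_of_nonneg h0, norm_of_nonneg (exp_pos _).le, mul_comm]

lemma exp_neg_div_isLittleO_pow {a : ℝ} (ha : 0 < a) (n : ℕ) :
    (fun x : ℝ => exp (-(a / x))) =o[𝓝[>] 0] fun x => x ^ n := by
  refine ((isLittleO_exp_neg_mul_rpow_atTop ha (-n)).comp_tendsto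
    tendsto_inv_nhdsGT_zero).congr (fun x => by simp [div_eq_mul_inv]) fun x => by simp

lemma sqrt_div_isBigO_inv (a : ℝ) : (fun x : ℝ => √(a / x)) =O[𝓝[>] 0] fun x => x⁻¹ := by
  refine .of_bound √a ?_
  filter_upwards [Ioo_mem_nhdsGT one_pos] with x ⟨hx0, hx1⟩
  have hx : x ≤ √x := (le_sqrt hx0.le hx0.le).mpr (by nlinarith)
  rw [norm_of_nonneg (sqrt_nonneg _), norm_of_nonneg (inv_nonneg.mpr hx0.le), sqrt_div' a hx0.le,
    ← div_eq_mul_inv]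
  exact div_le_div_of_nonneg_left (sqrt_nonneg a) hx0 hx

/-- `∑_{n≥1} e^{-n² x} = √(π/x)/2 - 1/2 + o(xᴺ)` as `x → 0⁺`. -/
theorem theta_asymp (N : ℕ) :
    (fun x : ℝ => (∑' n : ℕ, Real.exp (-(((n + 1 : ℕ) : ℝ) ^ 2 * x))) -
      (Real.sqrt (π / x) / 2 - 1 / 2)) =o[nhdsWithin 0 (Set.Ioi 0)]
    fun x : ℝ => x ^ N := by
  have hc : Tendsto (fun x : ℝ => π ^ 2 / x) (𝓝[>] 0) atTop :=
    tendsto_inv_nhdsGT_zero.const_mul_atTop (by positivity)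
  have hT : (fun x => thetaTail (π ^ 2 / x)) =o[𝓝[>] 0] fun x => x ^ (N + 1) :=
    (thetaTail_isBigO_exp_neg.comp_tendsto hc).trans_isLittleO
      (exp_neg_div_isLittleO_pow (by positivity) (N + 1))
  refine ((sqrt_div_isBigO_inv π).mul_isLittleO hT).congr' ?_ ?_
  · filter_upwards [self_mem_nhdsWithin] with x hx
    rw [← thetaTail_functional_equation hx, thetaTail]
    congr 2
    funext n
    push_cast
    ring_nf
  · filter_upwards [self_mem_nhdsWithin] with x (hx : 0 < x)
    rw [pow_succ', inv_mul_cancel_left₀ hx.ne']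
end
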